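/- Let a > 0, let k be a natural number, let t = [−5a, 5a] × [−5a, 5a] and t_r = [5a, 15a] × [−5a, 5a] in ℝ², and let S ⊆ ℝ² be a finite set with 2·|S ∩ t| ≤ k and 2·|S ∩ t_r| ≤ k. Suppose S contains at least one point in each of the six closed balls of radius a centered at (0,0), (2a,0), (4a,0), (6a,0), (8a,0), and (10a,0). Then every s ∈ S ∩ closedBall((0,0), a) and s' ∈ S ∩ closedBall((10a,0), a) satisfy d(s,s') ≥ 8a, and the graph distance between s and s' in the k-nearest-neighbor graph NN(S,k) is at most (5/(8a)) · d(s,s'). -/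

import Mathlib

open Metric

/-- The point `(x, y)` of the Euclidean plane. -/
def pt (x y : ℝ) : EuclideanSpace ℝ (Fin 2) := WithLp.toLp 2 ![x, y]

/-- The rectangle `[x₀, x₁] × [y₀, y₁]` of the Euclidean plane. -/
def tile (x₀ x₁ y₀ y₁ : ℝ) : Set (EuclideanSpace ℝ (Fin 2)) :=
  {x | x 0 ∈ Set.Icc x₀ x₁ ∧ x 1 ∈ Set.Icc y₀ y₁}

/-- `y` is a `k`-nearest neighbor of `x` in `S`: the number of points `z ∈ S \ {x}` with
`dist x z < dist x y` is strictly less than `k`. -/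
def IsKNearest (S : Set (EuclideanSpace ℝ (Fin 2))) (k : ℕ)
    (x y : EuclideanSpace ℝ (Fin 2)) : Prop :=
  {z ∈ S \ {x} | dist x z < dist x y}.ncard < k

/-- The `k`-nearest-neighbor graph on a set `S` of points of the Euclidean plane: distinct
points `x, y ∈ S` are adjacent iff `y` is a `k`-nearest neighbor of `x` or `x` is a
`k`-nearest neighbor of `y`. -/
def NNGraph (S : Set (EuclideanSpace ℝ (Fin 2))) (k : ℕ) : SimpleGraph S where
  Adj x y := x ≠ y ∧
    (IsKNearest S k (x : EuclideanSpace ℝ (Fin 2)) (y : EuclideanSpace ℝ (Fin 2)) ∨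
     IsKNearest S k (y : EuclideanSpace ℝ (Fin 2)) (x : EuclideanSpace ℝ (Fin 2)))
  symm := by
    constructor
    intro x y ⟨hne, h⟩
    exact ⟨hne.symm, h.symm⟩
  loopless := by
    constructor
    intro x ⟨hne, _⟩
    exact hne rfl

/-!
Consecutive centres of the chain `0, 2a, 4a, 6a, 8a, 10a` are `2a` apart, so a point `x` in one
ball and a point `y` in the next satisfy `d(x, y) ≤ 4a`. Every point closer to `x` than `y` then
lies within `5a` of the centre of `x`'s ball, hence in `t ∪ t_r`, which holds at most `k` points of
`S`; since `y` is one of those points but not closer than itself, fewer than `k` points are closer,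
so consecutive chain points are adjacent or equal. The graph distance is therefore at most `5`,
while `d(s, s') ≥ 10a - 2a`.
-/

lemma dist_pt_pt (x x' y : ℝ) : dist (pt x y) (pt x' y) = |x - x'| := by
  simp [pt, EuclideanSpace.dist_eq, Real.dist_eq, Real.sqrt_sq_eq_abs]

lemma closedBall_pt_subset_tile (x y r : ℝ) :
    closedBall (pt x y) r ⊆ tile (x - r) (x + r) (y - r) (y + r) := by
  intro z hz
  have h₀ := (PiLp.dist_apply_le z (pt x y) 0).trans (mem_closedBall.mp hz)
  have h₁ := (PiLp.dist_apply_le z (pt x y) 1).trans (mem_closedBall.mp hz)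
  simp only [pt, PiLp.toLp_apply, Matrix.cons_val_zero, Matrix.cons_val_one, Real.dist_eq,
    abs_le] at h₀ h₁
  exact ⟨⟨by linarith, by linarith⟩, by linarith, by linarith⟩

lemma tile_subset_tile {x₀ x₁ y₀ y₁ x₀' x₁' y₀' y₁' : ℝ} (hx₀ : x₀' ≤ x₀) (hx₁ : x₁ ≤ x₁')
    (hy₀ : y₀' ≤ y₀) (hy₁ : y₁ ≤ y₁') : tile x₀ x₁ y₀ y₁ ⊆ tile x₀' x₁' y₀' y₁' :=
  fun _ ⟨hx, hy⟩ => ⟨Set.Icc_subset_Icc hx₀ hx₁ hx, Set.Icc_subset_Icc hy₀ hy₁ hy⟩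

lemma tile_union_tile {x₀ x₁ x₂ : ℝ} (h₀₁ : x₀ ≤ x₁) (h₁₂ : x₁ ≤ x₂) (y₀ y₁ : ℝ) :
    tile x₀ x₁ y₀ y₁ ∪ tile x₁ x₂ y₀ y₁ = tile x₀ x₂ y₀ y₁ := by
  ext z
  change (_ ∧ _) ∨ (_ ∧ _) ↔ _ ∧ _
  rw [← or_and_right, ← Set.mem_union, Set.Icc_union_Icc_eq_Icc h₀₁ h₁₂]

lemma ncard_inter_tile_le_add (S : Set (EuclideanSpace ℝ (Fin 2))) {x₀ x₁ x₂ : ℝ}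
    (h₀₁ : x₀ ≤ x₁) (h₁₂ : x₁ ≤ x₂) (y₀ y₁ : ℝ) :
    (S ∩ tile x₀ x₂ y₀ y₁).ncard ≤ (S ∩ tile x₀ x₁ y₀ y₁).ncard + (S ∩ tile x₁ x₂ y₀ y₁).ncard := by
  rw [← tile_union_tile h₀₁ h₁₂, Set.inter_union_distrib_left]
  exact Set.ncard_union_le _ _

lemma SimpleGraph.edist_le_of_chain {V : Type*} {G : SimpleGraph V} {n : ℕ}
    (f : Fin (n + 1) → V) (hf : ∀ i : Fin n, G.edist (f i.castSucc) (f i.succ) ≤ 1) :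
    G.edist (f 0) (f (Fin.last n)) ≤ n := by
  induction n with
  | zero => simp
  | succ n ih =>
    calc G.edist (f 0) (f (Fin.last (n + 1)))
        ≤ G.edist (f 0) (f (Fin.last n).castSucc) +
            G.edist (f (Fin.last n).castSucc) (f (Fin.last n).succ) := G.edist_triangle
      _ ≤ n + 1 := add_le_add (ih (fun i => f i.castSucc) fun i => hf i.castSucc) (hf (Fin.last n))

lemma isKNearest_of_subset {S T : Set (EuclideanSpace ℝ (Fin 2))} {k : ℕ}
    {x y : EuclideanSpace ℝ (Fin 2)} (hT : T.Finite) (hTk : T.ncard ≤ k) (hyT : y ∈ T)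
    (hcloser : ∀ z ∈ S, dist x z < dist x y → z ∈ T) : IsKNearest S k x y := by
  have hssub : {z ∈ S \ {x} | dist x z < dist x y} ⊂ T :=
    (Set.ssubset_iff_of_subset fun z hz => hcloser z hz.1.1 hz.2).2
      ⟨y, hyT, fun hy => lt_irrefl _ hy.2⟩
  exact (Set.ncard_lt_ncard hssub hT).trans_le hTk

section ChainOfBalls

variable {S T : Set (EuclideanSpace ℝ (Fin 2))} {k : ℕ} {p q x y : EuclideanSpace ℝ (Fin 2)}
  {r : ℝ} (hT : T.Finite) (hTk : T.ncard ≤ k) (hST : S ∩ closedBall p (5 * r) ⊆ T)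
  (hpq : dist p q ≤ 2 * r) (hx : x ∈ closedBall p r) (hy : y ∈ closedBall q r)
include hT hTk hST hpq hx hy

lemma isKNearest_of_mem_closedBall (hyS : y ∈ S) : IsKNearest S k x y := by
  rw [mem_closedBall] at hx hy
  have hxy : dist x y ≤ 4 * r := by
    linarith [dist_triangle4 x p q y, dist_comm x p, dist_comm y q]
  refine isKNearest_of_subset hT hTk (hST ⟨hyS, ?_⟩) fun z hzS hxz => hST ⟨hzS, ?_⟩
  · rw [mem_closedBall]
    linarith [dist_triangle y q p, dist_comm q p, dist_nonneg.trans hx]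
  · rw [mem_closedBall]
    linarith [dist_triangle z x p, dist_comm z x, dist_comm x p]

lemma nnGraph_edist_le_one_of_mem_closedBall (hxS : x ∈ S) (hyS : y ∈ S) :
    (NNGraph S k).edist ⟨x, hxS⟩ ⟨y, hyS⟩ ≤ 1 := by
  rw [SimpleGraph.edist_le_one_iff_adj_or_eq]
  by_cases hxy : x = y
  · exact Or.inr (Subtype.ext hxy)
  · exact Or.inl ⟨Subtype.coe_ne_coe.mp hxy,
      Or.inl (isKNearest_of_mem_closedBall hT hTk hST hpq hx hy hyS)⟩

end ChainOfBalls

lemma nnGraph_edist_le_one_of_mem_closedBall_pt {a c c' : ℝ} {k : ℕ}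
    {S : Set (EuclideanSpace ℝ (Fin 2))} (ha : 0 ≤ a) (hS : S.Finite)
    (hk : (S ∩ tile (-(5*a)) (15*a) (-(5*a)) (5*a)).ncard ≤ k) {x y : EuclideanSpace ℝ (Fin 2)}
    (hxS : x ∈ S) (hyS : y ∈ S) (hx : x ∈ closedBall (pt c 0) a) (hy : y ∈ closedBall (pt c' 0) a)
    (hc : 0 ≤ c) (hc' : c' ≤ 10 * a) (hcc' : c' = c + 2 * a) :
    (NNGraph S k).edist ⟨x, hxS⟩ ⟨y, hyS⟩ ≤ 1 := by
  subst hcc'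
  have hball : S ∩ closedBall (pt c 0) (5 * a) ⊆ S ∩ tile (-(5*a)) (15*a) (-(5*a)) (5*a) :=
    Set.inter_subset_inter_right S ((closedBall_pt_subset_tile _ _ _).trans
      (tile_subset_tile (by linarith) (by linarith) (by linarith) (by linarith)))
  have hcc : dist (pt c 0) (pt (c + 2 * a) 0) ≤ 2 * a := by
    rw [dist_pt_pt, sub_add_cancel_left, abs_neg, abs_of_nonneg (by positivity)]
  exact nnGraph_edist_le_one_of_mem_closedBall (hS.subset Set.inter_subset_left) hk hball hcc
    hx hy hxS hyS

theorem stmt_12_general (a : ℝ) (ha : 0 < a) (k : ℕ) (S : Set (EuclideanSpace ℝ (Fin 2)))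
    (hS : S.Finite)
    (hcard : 2 * (S ∩ tile (-(5*a)) (5*a) (-(5*a)) (5*a)).ncard ≤ k)
    (hcard' : 2 * (S ∩ tile (5*a) (15*a) (-(5*a)) (5*a)).ncard ≤ k)
    (h2 : (S ∩ closedBall (pt (2*a) 0) a).Nonempty)
    (h4 : (S ∩ closedBall (pt (4*a) 0) a).Nonempty)
    (h6 : (S ∩ closedBall (pt (6*a) 0) a).Nonempty)
    (h8 : (S ∩ closedBall (pt (8*a) 0) a).Nonempty) :
    ∀ s, ∀ hs : s ∈ S, s ∈ closedBall (pt 0 0) a →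
    ∀ s', ∀ hs' : s' ∈ S, s' ∈ closedBall (pt (10*a) 0) a →
      8 * a ≤ dist s s' ∧
      ((NNGraph S k).dist ⟨s, hs⟩ ⟨s', hs'⟩ : ℝ) ≤ (5 / (8 * a)) * dist s s' := by
  intro s hs hs₀ s' hs' hs₁₀
  have hk : (S ∩ tile (-(5*a)) (15*a) (-(5*a)) (5*a)).ncard ≤ k := by
    have := ncard_inter_tile_le_add S (by linarith : -(5*a) ≤ 5*a) (by linarith : 5*a ≤ 15*a)
      (-(5*a)) (5*a)
    omega
  obtain ⟨p₂, hp₂S, hp₂⟩ := h2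
  obtain ⟨p₄, hp₄S, hp₄⟩ := h4
  obtain ⟨p₆, hp₆S, hp₆⟩ := h6
  obtain ⟨p₈, hp₈S, hp₈⟩ := h8
  have hedist : (NNGraph S k).edist ⟨s, hs⟩ ⟨s', hs'⟩ ≤ 5 := by
    refine SimpleGraph.edist_le_of_chain
      (![⟨s, hs⟩, ⟨p₂, hp₂S⟩, ⟨p₄, hp₄S⟩, ⟨p₆, hp₆S⟩, ⟨p₈, hp₈S⟩, ⟨s', hs'⟩] : Fin 6 → S)
      fun i => ?_
    fin_cases i
    · exact nnGraph_edist_le_one_of_mem_closedBall_pt ha.le hS hk hs hp₂S hs₀ hp₂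
        le_rfl (by linarith) (by ring)
    · exact nnGraph_edist_le_one_of_mem_closedBall_pt ha.le hS hk hp₂S hp₄S hp₂ hp₄
        (by linarith) (by linarith) (by ring)
    · exact nnGraph_edist_le_one_of_mem_closedBall_pt ha.le hS hk hp₄S hp₆S hp₄ hp₆
        (by linarith) (by linarith) (by ring)
    · exact nnGraph_edist_le_one_of_mem_closedBall_pt ha.le hS hk hp₆S hp₈S hp₆ hp₈
        (by linarith) (by linarith) (by ring)
    · exact nnGraph_edist_le_one_of_mem_closedBall_pt ha.le hS hk hp₈S hs' hp₈ hs₁₀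
        (by linarith) le_rfl (by ring)
  have hdist : 8 * a ≤ dist s s' := by
    have := dist_triangle4 (pt 0 0) s s' (pt (10*a) 0)
    rw [dist_pt_pt, zero_sub, abs_neg, abs_of_pos (by positivity), dist_comm] at this
    linarith [mem_closedBall.mp hs₀, mem_closedBall.mp hs₁₀]
  refine ⟨hdist, ?_⟩
  calc ((NNGraph S k).dist ⟨s, hs⟩ ⟨s', hs'⟩ : ℝ) ≤ 5 := by
        exact_mod_cast ENat.toNat_le_toNat hedist (by simp)
    _ ≤ 5 / (8 * a) * dist s s' := by
        rw [div_mul_eq_mul_div, le_div_iff₀ (by positivity)]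
        linarith

/-- Let `a > 0`, `k : ℕ`, `t = [-5a,5a] × [-5a,5a]`, `t_r = [5a,15a] × [-5a,5a]`, and let
`S` be a finite set with `2|S ∩ t| ≤ k` and `2|S ∩ t_r| ≤ k` which meets each of the six
closed balls of radius `a` centered at `(0,0)`, `(2a,0)`, `(4a,0)`, `(6a,0)`, `(8a,0)` and
`(10a,0)`. Then every `s ∈ S ∩ closedBall((0,0),a)` and `s' ∈ S ∩ closedBall((10a,0),a)`
satisfy `dist s s' ≥ 8a`, and the graph distance between them in the
`k`-nearest-neighbor graph `NNGraph S k` is at most `(5/(8a)) * dist s s'`. -/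
theorem stmt_12 (a : ℝ) (ha : 0 < a) (k : ℕ) (S : Set (EuclideanSpace ℝ (Fin 2)))
    (hS : S.Finite)
    (hcard : 2 * (S ∩ tile (-(5*a)) (5*a) (-(5*a)) (5*a)).ncard ≤ k)
    (hcard' : 2 * (S ∩ tile (5*a) (15*a) (-(5*a)) (5*a)).ncard ≤ k)
    (h0 : (S ∩ closedBall (pt 0 0) a).Nonempty)
    (h2 : (S ∩ closedBall (pt (2*a) 0) a).Nonempty)
    (h4 : (S ∩ closedBall (pt (4*a) 0) a).Nonempty)
    (h6 : (S ∩ closedBall (pt (6*a) 0) a).Nonempty)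
    (h8 : (S ∩ closedBall (pt (8*a) 0) a).Nonempty)
    (h10 : (S ∩ closedBall (pt (10*a) 0) a).Nonempty) :
    ∀ s, ∀ hs : s ∈ S, s ∈ closedBall (pt 0 0) a →
    ∀ s', ∀ hs' : s' ∈ S, s' ∈ closedBall (pt (10*a) 0) a →
      8 * a ≤ dist s s' ∧
      ((NNGraph S k).dist ⟨s, hs⟩ ⟨s', hs'⟩ : ℝ) ≤ (5 / (8 * a)) * dist s s' :=
  stmt_12_general a ha k S hS hcard hcard' h2 h4 h6 h8
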